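/- The local dependence measure of the DPRH model satisfies β(y₁,y₂) = 1 for all y₁, y₂ ∈ (a,b) with y₁ ≠ y₂ if and only if θ₁ = θ₁′ and θ₂ = θ₂′, where β(y₁,y₂) = F(y₁,y₂)·f(y₁,y₂) / (F₁(y₁,y₂)·F₂(y₁,y₂)) with F₁ = ∂F/∂y₁ and F₂ = ∂F/∂y₂. -/

import Mathlib

/-!
Write `pᵢ = F₀ yᵢ`, `K = θ₁ + θ₂` and let `Φ` be a primitive of `t ^ (K - θ₁' - 1)`. For
`y₁ < y₂` both integrals defining `F` are improper at `a` but have explicit antiderivatives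
vanishing at `a⁺`, giving `F = p₁ ^ K + θ₂ p₁ ^ θ₁' (Φ p₂ - Φ p₁)`. In `F f - F₁ F₂` the
`Φ`-terms cancel, leaving `(θ₁' - θ₁) θ₂ f₀ y₁ f₀ y₂ p₁ ^ (K + θ₁' - 1) p₂ ^ (K - θ₁' - 1)`,
while `F₁ F₂ > 0`; so `β(y₁, y₂) = 1` iff `θ₁ = θ₁'`. The density is invariant under
`(y₁, θ₁, θ₁') ↔ (y₂, θ₂, θ₂')`, which turns the case `y₂ < y₁` into the same computation
with the condition `θ₂ = θ₂'`.
-/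

open MeasureTheory Set

noncomputable def dprh (a b : ℝ) (F₀ f₀ : ℝ → ℝ) (θ₁ θ₂ θ₁' θ₂' : ℝ) (y₁ y₂ : ℝ) : ℝ :=
  if a < y₁ ∧ y₁ < y₂ ∧ y₂ < b then
    θ₁' * θ₂ * f₀ y₁ * f₀ y₂ * F₀ y₁ ^ (θ₁' - 1) * F₀ y₂ ^ (θ₁ + θ₂ - θ₁' - 1)
  else if a < y₂ ∧ y₂ < y₁ ∧ y₁ < b then
    θ₁ * θ₂' * f₀ y₁ * f₀ y₂ * F₀ y₁ ^ (θ₁ + θ₂ - θ₂' - 1) * F₀ y₂ ^ (θ₂' - 1)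
  else 0

open Filter Topology Real

namespace intervalIntegral

variable {G g : ℝ → ℝ} {s x : ℝ}

theorem integral_eq_sub_of_hasDerivAt_of_nonneg (hsx : s ≤ x) (hcont : ContinuousOn G (Icc s x))
    (hderiv : ∀ u ∈ Ioo s x, HasDerivAt G (g u) u) (hg : ∀ u ∈ Ioo s x, 0 ≤ g u) :
    IntervalIntegrable g volume s x ∧ ∫ u in s..x, g u = G x - G s := by
  have hint : IntervalIntegrable g volume s x :=
    (intervalIntegrable_iff_integrableOn_Ioc_of_le hsx).2
      (integrableOn_deriv_of_nonneg hcont hderiv hg)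
  exact ⟨hint, integral_eq_sub_of_hasDerivAt_of_le hsx hcont hderiv hint⟩

theorem integral_eq_of_hasDerivAt_of_tendsto_zero (hsx : s < x) (hcont : ContinuousOn G (Ioc s x))
    (hderiv : ∀ u ∈ Ioo s x, HasDerivAt G (g u) u) (hlim : Tendsto G (𝓝[>] s) (𝓝 0))
    (hg : ∀ u ∈ Ioo s x, 0 ≤ g u) :
    IntervalIntegrable g volume s x ∧ ∫ u in s..x, g u = G x := by
  classical
  have hcont' : ContinuousOn (Function.update G s 0) (Icc s x) := by
    rw [continuousOn_update_iff, Icc_sdiff_left]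
    exact ⟨hcont, fun _ => hlim.mono_left (nhdsWithin_mono _ Ioc_subset_Ioi_self)⟩
  have hderiv' : ∀ u ∈ Ioo s x, HasDerivAt (Function.update G s 0) (g u) u := fun u hu =>
    (hderiv u hu).congr_of_eventuallyEq <| by
      filter_upwards [Ioi_mem_nhds hu.1] with v hv using Function.update_of_ne hv.ne' _ _
  simpa [hsx.ne'] using integral_eq_sub_of_hasDerivAt_of_nonneg hsx.le hcont' hderiv' hg

end intervalIntegral

noncomputable def rpowPrimitive (θ t : ℝ) : ℝ :=
  if θ = 0 then log t else t ^ θ / θ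

theorem hasDerivAt_rpowPrimitive (θ : ℝ) {t : ℝ} (ht : 0 < t) :
    HasDerivAt (rpowPrimitive θ) (t ^ (θ - 1)) t := by
  unfold rpowPrimitive
  rcases eq_or_ne θ 0 with rfl | hθ
  · simpa [rpow_neg_one] using hasDerivAt_log ht.ne'
  · simp only [hθ, if_false]
    simpa [mul_div_cancel_left₀ _ hθ] using
      (Real.hasDerivAt_rpow_const (p := θ) (Or.inl ht.ne')).div_const θ

theorem tendsto_rpow_nhdsGT_zero {r : ℝ} (hr : 0 < r) :
    Tendsto (fun t : ℝ => t ^ r) (𝓝[>] 0) (𝓝 0) := by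
  simpa [zero_rpow hr.ne'] using
    ((continuousAt_rpow_const 0 r (Or.inr hr.le)).tendsto).mono_left nhdsWithin_le_nhds

theorem tendsto_rpow_mul_rpowPrimitive_nhdsGT_zero {r θ : ℝ} (hr : 0 < r) (hrθ : 0 < r + θ) :
    Tendsto (fun t => t ^ r * rpowPrimitive θ t) (𝓝[>] 0) (𝓝 0) := by
  unfold rpowPrimitive
  rcases eq_or_ne θ 0 with rfl | hθ
  · simpa [mul_comm] using tendsto_log_mul_rpow_nhdsGT_zero hr
  · simpa using ((tendsto_rpow_nhdsGT_zero hrθ).div_const θ).congr' <| by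
      filter_upwards [self_mem_nhdsWithin] with t (ht : 0 < t)
      rw [if_neg hθ, rpow_add ht, mul_div_assoc]

structure DPRHBaseline (a b : ℝ) (F₀ f₀ : ℝ → ℝ) : Prop where
  hasDerivAt : ∀ y ∈ Ioo a b, HasDerivAt F₀ (f₀ y) y
  deriv_pos : ∀ y ∈ Ioo a b, 0 < f₀ y
  pos : ∀ y ∈ Ioo a b, 0 < F₀ y
  tendsto_zero : Tendsto F₀ (𝓝[>] a) (𝓝 0)

namespace DPRHBaseline

variable {a b : ℝ} {F₀ f₀ : ℝ → ℝ} {y : ℝ}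

theorem tendsto_nhdsGT (hF : DPRHBaseline a b F₀ f₀) (hab : a < b) :
    Tendsto F₀ (𝓝[>] a) (𝓝[>] 0) :=
  tendsto_nhdsWithin_iff.2 ⟨hF.tendsto_zero, by
    filter_upwards [Ioo_mem_nhdsGT hab] with y hy using hF.pos y hy⟩

theorem hasDerivAt_rpow (hF : DPRHBaseline a b F₀ f₀) (θ : ℝ) (hy : y ∈ Ioo a b) :
    HasDerivAt (fun y => F₀ y ^ θ) (f₀ y * θ * F₀ y ^ (θ - 1)) y :=
  (hF.hasDerivAt y hy).rpow_const (Or.inl (hF.pos y hy).ne')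

theorem hasDerivAt_rpowPrimitive (hF : DPRHBaseline a b F₀ f₀) (θ : ℝ) (hy : y ∈ Ioo a b) :
    HasDerivAt (fun y => rpowPrimitive θ (F₀ y)) (F₀ y ^ (θ - 1) * f₀ y) y :=
  (_root_.hasDerivAt_rpowPrimitive θ (hF.pos y hy)).comp y (hF.hasDerivAt y hy)

theorem monotoneOn_rpowPrimitive (hF : DPRHBaseline a b F₀ f₀) (θ : ℝ) :
    MonotoneOn (fun y => rpowPrimitive θ (F₀ y)) (Ioo a b) := by
  refine monotoneOn_of_deriv_nonneg (convex_Ioo a b)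
    (HasDerivAt.continuousOn fun y hy => hF.hasDerivAt_rpowPrimitive θ hy)
    (fun y hy => (hF.hasDerivAt_rpowPrimitive θ (interior_subset hy)).differentiableAt
      |>.differentiableWithinAt) fun y hy => ?_
  rw [interior_Ioo] at hy
  rw [(hF.hasDerivAt_rpowPrimitive θ hy).deriv]
  exact mul_nonneg (rpow_nonneg (hF.pos y hy).le _) (hF.deriv_pos y hy).le

end DPRHBaseline

/-- The distribution function `F(s, t)` on `s ≤ t`; on `t ≤ s` it is
`dprhCdfOfLe F₀ θ₂ θ₁ θ₂' t s`. -/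
noncomputable def dprhCdfOfLe (F₀ : ℝ → ℝ) (θ₁ θ₂ θ₁' s t : ℝ) : ℝ :=
  F₀ s ^ (θ₁ + θ₂) + θ₂ * F₀ s ^ θ₁' *
    (rpowPrimitive (θ₁ + θ₂ - θ₁') (F₀ t) - rpowPrimitive (θ₁ + θ₂ - θ₁') (F₀ s))

section CdfOfLe

variable {a b : ℝ} {F₀ f₀ : ℝ → ℝ} {θ₁ θ₂ θ₁' s t : ℝ}

@[simp]
theorem dprhCdfOfLe_self : dprhCdfOfLe F₀ θ₁ θ₂ θ₁' s s = F₀ s ^ (θ₁ + θ₂) := by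
  simp [dprhCdfOfLe]

theorem hasDerivAt_dprhCdfOfLe_left (hF : DPRHBaseline a b F₀ f₀) (t : ℝ) (hs : s ∈ Ioo a b) :
    HasDerivAt (fun s => dprhCdfOfLe F₀ θ₁ θ₂ θ₁' s t)
      (θ₁ * f₀ s * F₀ s ^ (θ₁ + θ₂ - 1) + θ₁' * θ₂ * f₀ s * F₀ s ^ (θ₁' - 1) *
        (rpowPrimitive (θ₁ + θ₂ - θ₁') (F₀ t) - rpowPrimitive (θ₁ + θ₂ - θ₁') (F₀ s))) s := by
  have hpow : F₀ s ^ θ₁' * F₀ s ^ (θ₁ + θ₂ - θ₁' - 1) = F₀ s ^ (θ₁ + θ₂ - 1) := by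
    rw [← rpow_add (hF.pos s hs)]; ring_nf
  refine ((hF.hasDerivAt_rpow _ hs).add (((hF.hasDerivAt_rpow θ₁' hs).const_mul θ₂).mul
    ((hF.hasDerivAt_rpowPrimitive _ hs).const_sub _))).congr_deriv ?_
  linear_combination (-θ₂ * f₀ s) * hpow

theorem hasDerivAt_dprhCdfOfLe_right (hF : DPRHBaseline a b F₀ f₀) (s : ℝ) (ht : t ∈ Ioo a b) :
    HasDerivAt (fun t => dprhCdfOfLe F₀ θ₁ θ₂ θ₁' s t)
      (θ₂ * F₀ s ^ θ₁' * (F₀ t ^ (θ₁ + θ₂ - θ₁' - 1) * f₀ t)) t :=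
  (((hF.hasDerivAt_rpowPrimitive _ ht).sub_const _).const_mul _).const_add _

theorem tendsto_dprhCdfOfLe (hF : DPRHBaseline a b F₀ f₀) (hab : a < b) (hθ : 0 < θ₁ + θ₂)
    (hθ₁' : 0 < θ₁') (t : ℝ) :
    Tendsto (fun s => dprhCdfOfLe F₀ θ₁ θ₂ θ₁' s t) (𝓝[>] a) (𝓝 0) := by
  set c := θ₁ + θ₂ - θ₁'
  have h : Tendsto (fun x => x ^ (θ₁ + θ₂) + θ₂ * (x ^ θ₁' * rpowPrimitive c (F₀ t)) -
      θ₂ * (x ^ θ₁' * rpowPrimitive c x)) (𝓝[>] 0) (𝓝 0) := by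
    simpa using ((tendsto_rpow_nhdsGT_zero hθ).add
      (((tendsto_rpow_nhdsGT_zero hθ₁').mul_const _).const_mul θ₂)).sub
      ((tendsto_rpow_mul_rpowPrimitive_nhdsGT_zero hθ₁' (by simpa [c] using hθ)).const_mul θ₂)
  exact (h.comp (hF.tendsto_nhdsGT hab)).congr fun s => by
    simp only [Function.comp, dprhCdfOfLe]; ring

end CdfOfLe

section DPRH

open intervalIntegral

variable {a b : ℝ} {F₀ f₀ : ℝ → ℝ} {θ₁ θ₂ θ₁' θ₂' u t y₁ y₂ : ℝ}

theorem dprh_of_lt (h₁ : a < y₁) (h₁₂ : y₁ < y₂) (h₂ : y₂ < b) :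
    dprh a b F₀ f₀ θ₁ θ₂ θ₁' θ₂' y₁ y₂ =
      θ₁' * θ₂ * f₀ y₁ * f₀ y₂ * F₀ y₁ ^ (θ₁' - 1) * F₀ y₂ ^ (θ₁ + θ₂ - θ₁' - 1) :=
  if_pos ⟨h₁, h₁₂, h₂⟩

theorem dprh_of_gt (h₂ : a < y₂) (h₂₁ : y₂ < y₁) (h₁ : y₁ < b) :
    dprh a b F₀ f₀ θ₁ θ₂ θ₁' θ₂' y₁ y₂ =
      θ₁ * θ₂' * f₀ y₁ * f₀ y₂ * F₀ y₁ ^ (θ₁ + θ₂ - θ₂' - 1) * F₀ y₂ ^ (θ₂' - 1) := by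
  rw [dprh, if_neg fun h => h₂₁.not_gt h.2.1, if_pos ⟨h₂, h₂₁, h₁⟩]

theorem dprh_swap :
    dprh a b F₀ f₀ θ₁ θ₂ θ₁' θ₂' y₁ y₂ = dprh a b F₀ f₀ θ₂ θ₁ θ₂' θ₁' y₂ y₁ := by
  rw [dprh, dprh, add_comm θ₂ θ₁]
  split_ifs <;> grind

theorem dprh_nonneg (hF : DPRHBaseline a b F₀ f₀) (hθ₁ : 0 < θ₁) (hθ₂ : 0 < θ₂)
    (hθ₁' : 0 < θ₁') (hθ₂' : 0 < θ₂') : 0 ≤ dprh a b F₀ f₀ θ₁ θ₂ θ₁' θ₂' y₁ y₂ := by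
  by_cases hy : y₁ ∈ Ioo a b ∧ y₂ ∈ Ioo a b
  · have := hF.deriv_pos y₁ hy.1; have := hF.deriv_pos y₂ hy.2
    have := hF.pos y₁ hy.1; have := hF.pos y₂ hy.2
    unfold dprh; split_ifs <;> positivity
  · rw [dprh, if_neg (by grind), if_neg (by grind)]

theorem integral_dprh_of_le (hF : DPRHBaseline a b F₀ f₀) (hθ₁ : 0 < θ₁) (hθ₂ : 0 < θ₂)
    (hθ₁' : 0 < θ₁') (hθ₂' : 0 < θ₂') (hu : u ∈ Ioo a b) (ht : t ∈ Ioo a b) (htu : t ≤ u) :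
    IntervalIntegrable (fun v => dprh a b F₀ f₀ θ₁ θ₂ θ₁' θ₂' u v) volume a t ∧
      ∫ v in a..t, dprh a b F₀ f₀ θ₁ θ₂ θ₁' θ₂' u v =
        θ₁ * F₀ t ^ θ₂' * (F₀ u ^ (θ₁ + θ₂ - θ₂' - 1) * f₀ u) := by
  have hsub : Ioc a t ⊆ Ioo a b := Ioc_subset_Ioo_right ht.2
  set C := F₀ u ^ (θ₁ + θ₂ - θ₂' - 1) * f₀ u
  have hG : ∀ v ∈ Ioo a b, HasDerivAt (fun v => θ₁ * F₀ v ^ θ₂' * C)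
      (θ₁ * (f₀ v * θ₂' * F₀ v ^ (θ₂' - 1)) * C) v :=
    fun v hv => ((hF.hasDerivAt_rpow θ₂' hv).const_mul θ₁).mul_const C
  refine integral_eq_of_hasDerivAt_of_tendsto_zero ht.1
    (HasDerivAt.continuousOn fun v hv => hG v (hsub hv)) (fun v hv => ?_) ?_
    fun v _ => dprh_nonneg hF hθ₁ hθ₂ hθ₁' hθ₂'
  · rw [dprh_of_gt hv.1 (hv.2.trans_le htu) hu.2]
    exact (hG v (hsub (Ioo_subset_Ioc_self hv))).congr_deriv (by ring)
  · have hlim := (tendsto_rpow_nhdsGT_zero hθ₂').comp (hF.tendsto_nhdsGT (ht.1.trans ht.2))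
    simpa using (hlim.const_mul θ₁).mul_const C

theorem hasDerivAt_dprhCdfOfLe_left_eq_integral (hF : DPRHBaseline a b F₀ f₀) (hθ₁ : 0 < θ₁)
    (hθ₂ : 0 < θ₂) (hθ₁' : 0 < θ₁') (hθ₂' : 0 < θ₂') (hu : u ∈ Ioo a b) (ht : t ∈ Ioo a b)
    (hut : u < t) :
    HasDerivAt (fun s => dprhCdfOfLe F₀ θ₁ θ₂ θ₁' s t)
      (∫ v in a..t, dprh a b F₀ f₀ θ₁ θ₂ θ₁' θ₂' u v) u := by
  set c := θ₁ + θ₂ - θ₁'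
  obtain ⟨hint₁, hval₁⟩ := integral_dprh_of_le hF hθ₁ hθ₂ hθ₁' hθ₂' hu hu le_rfl
  have hsub : Icc u t ⊆ Ioo a b := Icc_subset_Ioo hu.1 ht.2
  have hG : ∀ v ∈ Ioo a b, HasDerivAt
      (fun v => θ₁' * θ₂ * f₀ u * F₀ u ^ (θ₁' - 1) * rpowPrimitive c (F₀ v))
      (θ₁' * θ₂ * f₀ u * F₀ u ^ (θ₁' - 1) * (F₀ v ^ (c - 1) * f₀ v)) v :=
    fun v hv => (hF.hasDerivAt_rpowPrimitive c hv).const_mul _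
  obtain ⟨hint₂, hval₂⟩ := integral_eq_sub_of_hasDerivAt_of_nonneg hut.le
    (HasDerivAt.continuousOn fun v hv => hG v (hsub hv))
    (g := fun v => dprh a b F₀ f₀ θ₁ θ₂ θ₁' θ₂' u v) (fun v hv => by
      rw [dprh_of_lt hu.1 hv.1 (hv.2.trans ht.2)]
      exact (hG v (hsub (Ioo_subset_Icc_self hv))).congr_deriv (by ring))
    fun v _ => dprh_nonneg hF hθ₁ hθ₂ hθ₁' hθ₂'
  have hpow : F₀ u ^ θ₂' * F₀ u ^ (θ₁ + θ₂ - θ₂' - 1) = F₀ u ^ (θ₁ + θ₂ - 1) := by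
    rw [← rpow_add (hF.pos u hu)]; ring_nf
  rw [← integral_add_adjacent_intervals hint₁ hint₂, hval₁, hval₂]
  exact (hasDerivAt_dprhCdfOfLe_left hF t hu).congr_deriv
    (by linear_combination (-θ₁ * f₀ u) * hpow)

theorem integral_integral_dprh_of_le (hF : DPRHBaseline a b F₀ f₀) (hθ₁ : 0 < θ₁)
    (hθ₂ : 0 < θ₂) (hθ₁' : 0 < θ₁') (hθ₂' : 0 < θ₂') (h₁ : y₁ ∈ Ioo a b) (h₂ : y₂ ∈ Ioo a b)
    (h₁₂ : y₁ ≤ y₂) :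
    IntervalIntegrable (fun u => ∫ v in a..y₂, dprh a b F₀ f₀ θ₁ θ₂ θ₁' θ₂' u v) volume a y₁ ∧
      ∫ u in a..y₁, ∫ v in a..y₂, dprh a b F₀ f₀ θ₁ θ₂ θ₁' θ₂' u v =
        dprhCdfOfLe F₀ θ₁ θ₂ θ₁' y₁ y₂ :=
  integral_eq_of_hasDerivAt_of_tendsto_zero h₁.1
    (HasDerivAt.continuousOn fun _ hs => hasDerivAt_dprhCdfOfLe_left hF y₂
      (Ioc_subset_Ioo_right h₁.2 hs))
    (fun _ hu => hasDerivAt_dprhCdfOfLe_left_eq_integral hF hθ₁ hθ₂ hθ₁' hθ₂'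
      ⟨hu.1, hu.2.trans h₁.2⟩ h₂ (hu.2.trans_le h₁₂))
    (tendsto_dprhCdfOfLe hF (h₁.1.trans h₁.2) (by linarith) hθ₁' y₂)
    fun _ _ => integral_nonneg h₂.1.le fun _ _ => dprh_nonneg hF hθ₁ hθ₂ hθ₁' hθ₂'

theorem integral_integral_dprh_of_lt (hF : DPRHBaseline a b F₀ f₀) (hθ₁ : 0 < θ₁)
    (hθ₂ : 0 < θ₂) (hθ₁' : 0 < θ₁') (hθ₂' : 0 < θ₂') (h₁ : y₁ ∈ Ioo a b) (h₂ : y₂ ∈ Ioo a b)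
    (h₂₁ : y₂ < y₁) :
    ∫ u in a..y₁, ∫ v in a..y₂, dprh a b F₀ f₀ θ₁ θ₂ θ₁' θ₂' u v =
      dprhCdfOfLe F₀ θ₂ θ₁ θ₂' y₂ y₁ := by
  obtain ⟨hint₁, hval₁⟩ := integral_integral_dprh_of_le hF hθ₁ hθ₂ hθ₁' hθ₂' h₂ h₂ le_rfl
  have hsub : Icc y₂ y₁ ⊆ Ioo a b := Icc_subset_Ioo h₂.1 h₁.2
  obtain ⟨hint₂, hval₂⟩ := integral_eq_sub_of_hasDerivAt_of_nonneg h₂₁.le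
    (HasDerivAt.continuousOn fun _ hu => hasDerivAt_dprhCdfOfLe_right hF y₂ (hsub hu))
    (g := fun u => ∫ v in a..y₂, dprh a b F₀ f₀ θ₁ θ₂ θ₁' θ₂' u v) (fun u hu => by
      rw [(integral_dprh_of_le hF hθ₁ hθ₂ hθ₁' hθ₂' (hsub (Ioo_subset_Icc_self hu)) h₂
        hu.1.le).2, add_comm θ₁ θ₂]
      exact hasDerivAt_dprhCdfOfLe_right hF y₂ (hsub (Ioo_subset_Icc_self hu)))
    fun _ _ => integral_nonneg h₂.1.le fun _ _ => dprh_nonneg hF hθ₁ hθ₂ hθ₁' hθ₂'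
  rw [← integral_add_adjacent_intervals hint₁ hint₂, hval₁, hval₂, dprhCdfOfLe_self,
    dprhCdfOfLe_self, add_comm θ₂ θ₁, add_sub_cancel]

end DPRH

noncomputable def localDependence (H h : ℝ → ℝ → ℝ) (y₁ y₂ : ℝ) : ℝ :=
  H y₁ y₂ * h y₁ y₂ / (deriv (fun s => H s y₂) y₁ * deriv (fun t => H y₁ t) y₂)

section LocalDependence

variable {H G h : ℝ → ℝ → ℝ} {y₁ y₂ : ℝ}

theorem localDependence_congr (hHG : ∀ᶠ z in 𝓝 (y₁, y₂), H z.1 z.2 = G z.1 z.2) :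
    localDependence H h y₁ y₂ = localDependence G h y₁ y₂ := by
  have h₁ : (fun s => H s y₂) =ᶠ[𝓝 y₁] fun s => G s y₂ :=
    (Continuous.prodMk_left y₂).continuousAt.eventually hHG
  have h₂ : (fun t => H y₁ t) =ᶠ[𝓝 y₂] fun t => G y₁ t :=
    (Continuous.prodMk_right y₁).continuousAt.eventually hHG
  rw [localDependence, localDependence, h₁.deriv_eq, h₂.deriv_eq, hHG.self_of_nhds]

theorem localDependence_swap :
    localDependence (fun s t => H t s) (fun s t => h t s) y₁ y₂ = localDependence H h y₂ y₁ := by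
  rw [localDependence, localDependence, mul_comm (deriv _ _)]

end LocalDependence

section DPRHLocalDependence

variable {a b : ℝ} {F₀ f₀ : ℝ → ℝ} {θ₁ θ₂ θ₁' θ₂' s t y₁ y₂ : ℝ}

theorem localDependence_dprhCdfOfLe_eq_one_iff (hF : DPRHBaseline a b F₀ f₀) (hθ₁ : 0 < θ₁)
    (hθ₂ : 0 < θ₂) (hθ₁' : 0 < θ₁') (hs : s ∈ Ioo a b) (ht : t ∈ Ioo a b) (hst : s < t) :
    localDependence (dprhCdfOfLe F₀ θ₁ θ₂ θ₁') (dprh a b F₀ f₀ θ₁ θ₂ θ₁' θ₂') s t = 1 ↔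
      θ₁ = θ₁' := by
  set c := θ₁ + θ₂ - θ₁'
  set D := rpowPrimitive c (F₀ t) - rpowPrimitive c (F₀ s)
  have hD : 0 ≤ D := sub_nonneg.2 (hF.monotoneOn_rpowPrimitive c hs ht hst.le)
  have hp := hF.pos s hs
  have hq := hF.pos t ht
  have hfs := hF.deriv_pos s hs
  have hft := hF.deriv_pos t ht
  have hpK : F₀ s ^ (θ₁ + θ₂) = F₀ s * F₀ s ^ (θ₁ + θ₂ - 1) := by
    rw [rpow_sub_one hp.ne', mul_div_cancel₀ _ hp.ne']
  have hpθ : F₀ s ^ θ₁' = F₀ s * F₀ s ^ (θ₁' - 1) := by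
    rw [rpow_sub_one hp.ne', mul_div_cancel₀ _ hp.ne']
  have hden : 0 < (θ₁ * f₀ s * F₀ s ^ (θ₁ + θ₂ - 1) + θ₁' * θ₂ * f₀ s * F₀ s ^ (θ₁' - 1) * D) *
      (θ₂ * F₀ s ^ θ₁' * (F₀ t ^ (c - 1) * f₀ t)) := by positivity
  have hgap : dprhCdfOfLe F₀ θ₁ θ₂ θ₁' s t *
        (θ₁' * θ₂ * f₀ s * f₀ t * F₀ s ^ (θ₁' - 1) * F₀ t ^ (c - 1)) -
      (θ₁ * f₀ s * F₀ s ^ (θ₁ + θ₂ - 1) + θ₁' * θ₂ * f₀ s * F₀ s ^ (θ₁' - 1) * D) *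
        (θ₂ * F₀ s ^ θ₁' * (F₀ t ^ (c - 1) * f₀ t)) =
      (θ₁' - θ₁) * (θ₂ * f₀ s * f₀ t * F₀ s * F₀ s ^ (θ₁' - 1) * F₀ s ^ (θ₁ + θ₂ - 1) *
        F₀ t ^ (c - 1)) := by
    rw [dprhCdfOfLe, hpK, hpθ]; ring
  have hpos : 0 < θ₂ * f₀ s * f₀ t * F₀ s * F₀ s ^ (θ₁' - 1) * F₀ s ^ (θ₁ + θ₂ - 1) *
      F₀ t ^ (c - 1) := by positivity
  rw [localDependence, dprh_of_lt hs.1 hst ht.2, (hasDerivAt_dprhCdfOfLe_left hF t hs).deriv,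
    (hasDerivAt_dprhCdfOfLe_right hF s ht).deriv, div_eq_one_iff_eq hden.ne', ← sub_eq_zero,
    hgap, mul_eq_zero, sub_eq_zero, or_iff_left hpos.ne', eq_comm]

theorem dprh_localDependence_eq_one_iff_of_lt (hF : DPRHBaseline a b F₀ f₀) (hθ₁ : 0 < θ₁)
    (hθ₂ : 0 < θ₂) (hθ₁' : 0 < θ₁') (hθ₂' : 0 < θ₂') (h₁ : y₁ ∈ Ioo a b) (h₂ : y₂ ∈ Ioo a b)
    (h₁₂ : y₁ < y₂) :
    localDependence (fun y₁ y₂ => ∫ u in a..y₁, ∫ v in a..y₂, dprh a b F₀ f₀ θ₁ θ₂ θ₁' θ₂' u v)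
      (dprh a b F₀ f₀ θ₁ θ₂ θ₁' θ₂') y₁ y₂ = 1 ↔ θ₁ = θ₁' := by
  have hnhds : ∀ᶠ z in 𝓝 (y₁, y₂), a < z.1 ∧ z.1 < z.2 ∧ z.2 < b :=
    (continuousAt_const.eventually_lt continuousAt_fst h₁.1).and
      ((continuousAt_fst.eventually_lt continuousAt_snd h₁₂).and
        (continuousAt_snd.eventually_lt continuousAt_const h₂.2))
  rw [localDependence_congr (G := dprhCdfOfLe F₀ θ₁ θ₂ θ₁') (hnhds.mono fun z hz =>
    (integral_integral_dprh_of_le hF hθ₁ hθ₂ hθ₁' hθ₂' ⟨hz.1, hz.2.1.trans hz.2.2⟩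
      ⟨hz.1.trans hz.2.1, hz.2.2⟩ hz.2.1.le).2)]
  exact localDependence_dprhCdfOfLe_eq_one_iff hF hθ₁ hθ₂ hθ₁' h₁ h₂ h₁₂

theorem dprh_localDependence_eq_one_iff_of_gt (hF : DPRHBaseline a b F₀ f₀) (hθ₁ : 0 < θ₁)
    (hθ₂ : 0 < θ₂) (hθ₁' : 0 < θ₁') (hθ₂' : 0 < θ₂') (h₁ : y₁ ∈ Ioo a b) (h₂ : y₂ ∈ Ioo a b)
    (h₂₁ : y₂ < y₁) :
    localDependence (fun y₁ y₂ => ∫ u in a..y₁, ∫ v in a..y₂, dprh a b F₀ f₀ θ₁ θ₂ θ₁' θ₂' u v)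
      (dprh a b F₀ f₀ θ₁ θ₂ θ₁' θ₂') y₁ y₂ = 1 ↔ θ₂ = θ₂' := by
  have hnhds : ∀ᶠ z in 𝓝 (y₁, y₂), a < z.2 ∧ z.2 < z.1 ∧ z.1 < b :=
    (continuousAt_const.eventually_lt continuousAt_snd h₂.1).and
      ((continuousAt_snd.eventually_lt continuousAt_fst h₂₁).and
        (continuousAt_fst.eventually_lt continuousAt_const h₁.2))
  have hswap : dprh a b F₀ f₀ θ₁ θ₂ θ₁' θ₂' = fun y₁ y₂ => dprh a b F₀ f₀ θ₂ θ₁ θ₂' θ₁' y₂ y₁ :=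
    funext₂ fun _ _ => dprh_swap
  rw [localDependence_congr (G := fun y₁ y₂ => dprhCdfOfLe F₀ θ₂ θ₁ θ₂' y₂ y₁) (hnhds.mono
    fun z hz => integral_integral_dprh_of_lt hF hθ₁ hθ₂ hθ₁' hθ₂' ⟨hz.1.trans hz.2.1, hz.2.2⟩
      ⟨hz.1, hz.2.1.trans hz.2.2⟩ hz.2.1), hswap, localDependence_swap]
  exact localDependence_dprhCdfOfLe_eq_one_iff hF hθ₂ hθ₁ hθ₂' h₂ h₁ h₂₁

end DPRHLocalDependence

theorem dprh_local_dependence_one_iff_general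
    (a b : ℝ) (hab : a < b) (F₀ f₀ : ℝ → ℝ)
    (hderiv : ∀ y ∈ Ioo a b, HasDerivAt F₀ (f₀ y) y)
    (hf₀pos : ∀ y ∈ Ioo a b, 0 < f₀ y)
    (hF₀pos : ∀ y ∈ Ioo a b, 0 < F₀ y)
    (hFa : Filter.Tendsto F₀ (nhdsWithin a (Ioi a)) (nhds 0))
    (θ₁ θ₂ θ₁' θ₂' : ℝ) (hθ₁ : 0 < θ₁) (hθ₂ : 0 < θ₂) (hθ₁' : 0 < θ₁') (hθ₂' : 0 < θ₂')
    :
    (∀ y₁ ∈ Ioo a b, ∀ y₂ ∈ Ioo a b, y₁ ≠ y₂ →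
      (∫ u in a..y₁, ∫ v in a..y₂, dprh a b F₀ f₀ θ₁ θ₂ θ₁' θ₂' u v) * dprh a b F₀ f₀ θ₁ θ₂ θ₁' θ₂' y₁ y₂ /
      (deriv (fun s => ∫ u in a..s, ∫ v in a..y₂, dprh a b F₀ f₀ θ₁ θ₂ θ₁' θ₂' u v) y₁ *
        deriv (fun t => ∫ u in a..y₁, ∫ v in a..t, dprh a b F₀ f₀ θ₁ θ₂ θ₁' θ₂' u v) y₂) = 1) ↔ (θ₁ = θ₁' ∧ θ₂ = θ₂') := by
  have hF : DPRHBaseline a b F₀ f₀ := ⟨hderiv, hf₀pos, hF₀pos, hFa⟩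
  obtain ⟨m, hm, n, hn, hmn⟩ : ∃ m ∈ Ioo a b, ∃ n ∈ Ioo a b, m < n :=
    ⟨(2 * a + b) / 3, ⟨by linarith, by linarith⟩, (a + 2 * b) / 3, ⟨by linarith, by linarith⟩,
      by linarith⟩
  refine ⟨fun h => ⟨?_, ?_⟩, fun ⟨h₁, h₂⟩ y₁ hy₁ y₂ hy₂ hne => ?_⟩
  · exact (dprh_localDependence_eq_one_iff_of_lt hF hθ₁ hθ₂ hθ₁' hθ₂' hm hn hmn).1
      (h m hm n hn hmn.ne)
  · exact (dprh_localDependence_eq_one_iff_of_gt hF hθ₁ hθ₂ hθ₁' hθ₂' hn hm hmn).1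
      (h n hn m hm hmn.ne')
  rcases hne.lt_or_gt with h₁₂ | h₂₁
  · exact (dprh_localDependence_eq_one_iff_of_lt hF hθ₁ hθ₂ hθ₁' hθ₂' hy₁ hy₂ h₁₂).2 h₁
  · exact (dprh_localDependence_eq_one_iff_of_gt hF hθ₁ hθ₂ hθ₁' hθ₂' hy₁ hy₂ h₂₁).2 h₂

theorem dprh_local_dependence_one_iff
    (a b : ℝ) (hab : a < b) (F₀ f₀ : ℝ → ℝ)
    (hderiv : ∀ y ∈ Ioo a b, HasDerivAt F₀ (f₀ y) y)
    (hf₀cont : ContinuousOn f₀ (Ioo a b))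
    (hmono : StrictMonoOn F₀ (Ioo a b))
    (hf₀pos : ∀ y ∈ Ioo a b, 0 < f₀ y)
    (hF₀pos : ∀ y ∈ Ioo a b, 0 < F₀ y)
    (hF₀lt1 : ∀ y ∈ Ioo a b, F₀ y < 1)
    (hFa : Filter.Tendsto F₀ (nhdsWithin a (Ioi a)) (nhds 0))
    (hFb : Filter.Tendsto F₀ (nhdsWithin b (Iio b)) (nhds 1))
    (θ₁ θ₂ θ₁' θ₂' : ℝ) (hθ₁ : 0 < θ₁) (hθ₂ : 0 < θ₂) (hθ₁' : 0 < θ₁') (hθ₂' : 0 < θ₂')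
    :
    (∀ y₁ ∈ Ioo a b, ∀ y₂ ∈ Ioo a b, y₁ ≠ y₂ →
      (∫ u in a..y₁, ∫ v in a..y₂, dprh a b F₀ f₀ θ₁ θ₂ θ₁' θ₂' u v) * dprh a b F₀ f₀ θ₁ θ₂ θ₁' θ₂' y₁ y₂ /
      (deriv (fun s => ∫ u in a..s, ∫ v in a..y₂, dprh a b F₀ f₀ θ₁ θ₂ θ₁' θ₂' u v) y₁ *
        deriv (fun t => ∫ u in a..y₁, ∫ v in a..t, dprh a b F₀ f₀ θ₁ θ₂ θ₁' θ₂' u v) y₂) = 1) ↔ (θ₁ = θ₁' ∧ θ₂ = θ₂') :=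
  dprh_local_dependence_one_iff_general a b hab F₀ f₀ hderiv hf₀pos hF₀pos hFa θ₁ θ₂ θ₁' θ₂' hθ₁ hθ₂
    hθ₁' hθ₂'
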